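/- For fixed multisets A (size n, mean ā) and B (size m, mean b̄) of reals and fixed k with 1 ≤ k < n, the function S ↦ TSS(A∖S) + TSS(B∪S) over k-element sub-multisets S of A depends on S only through σ = Σ_{s∈S} s, and equals −(1/(n−k) + 1/(m+k))σ² + (2ā·n/(n−k) − 2b̄·m/(m+k))σ + C for a constant C independent of S. In particular it is a concave quadratic in σ. -/
import Mathlib


/-- Total sum of squares (unhalved) of a finite multiset of reals. -/
noncomputable def tss (X : Multiset ℝ) : ℝ :=
  (X.map (fun x => (x - X.sum / X.card) ^ 2)).sum

lemma tss_eq (X : Multiset ℝ) (h : (X.card : ℝ) ≠ 0) :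
    tss X = (X.map (fun x => x ^ 2)).sum - X.sum ^ 2 / X.card := by
  have hexp : ∀ x : ℝ, (x - X.sum / X.card) ^ 2
      = x ^ 2 - (2 * (X.sum / X.card)) * x + (X.sum / X.card) ^ 2 := by
    intro x; ring
  have h1 : (X.map (fun x => (x - X.sum / X.card) ^ 2)).sum
      = (X.map (fun x => x ^ 2)).sum - (2 * (X.sum / X.card)) * X.sum
        + (X.card : ℝ) * (X.sum / X.card) ^ 2 := by
    simp only [hexp]
    rw [Multiset.sum_map_add, Multiset.sum_map_sub, Multiset.sum_map_mul_left]
    simp [Multiset.map_id', mul_comm]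
  rw [tss, h1]
  field_simp
  ring

/-- For fixed `A`, `B` and `k`, the split criterion `TSS(A∖S) + TSS(B∪S)`
depends on a `k`-element sub-multiset `S ⊆ A` only through `σ = Σ_{s∈S} s`,
as a concave quadratic in `σ`. -/
theorem tss_split_quadratic (A B : Multiset ℝ) (k : ℕ)
    (hk0 : 1 ≤ k) (hkn : k < A.card) :
    ∃ C : ℝ, ∀ S : Multiset ℝ, S ≤ A → S.card = k →
      tss (A - S) + tss (B + S)
        = -(1 / ((A.card : ℝ) - k) + 1 / ((B.card : ℝ) + k)) * S.sum ^ 2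
          + (2 * (A.sum / A.card) * A.card / ((A.card : ℝ) - k)
             - 2 * (B.sum / B.card) * B.card / ((B.card : ℝ) + k)) * S.sum
          + C := by
  refine ⟨(A.map (fun x => x ^ 2)).sum + (B.map (fun x => x ^ 2)).sum
      - A.sum ^ 2 / ((A.card : ℝ) - k) - B.sum ^ 2 / ((B.card : ℝ) + k), ?_⟩
  intro S hS hSk
  have hd1 : ((A.card : ℝ) - k) ≠ 0 := by
    have : (k : ℝ) < A.card := by exact_mod_cast hkn
    linarith
  have hd2 : ((B.card : ℝ) + k) ≠ 0 := by
    have : (1 : ℝ) ≤ k := by exact_mod_cast hk0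
    positivity
  -- cards
  have hcardAS : ((A - S).card : ℝ) = (A.card : ℝ) - k := by
    rw [Multiset.card_sub hS, hSk, Nat.cast_sub hkn.le]
  have hcardBS : ((B + S).card : ℝ) = (B.card : ℝ) + k := by
    rw [Multiset.card_add, hSk]; push_cast; ring
  have hAdecomp : A - S + S = A := tsub_add_cancel_of_le hS
  have hsumAS : (A - S).sum = A.sum - S.sum := by
    have := congrArg Multiset.sum hAdecomp
    rw [Multiset.sum_add] at this
    linarith
  have hsqAS : ((A - S).map (fun x => x ^ 2)).sum
      = (A.map (fun x => x ^ 2)).sum - (S.map (fun x => x ^ 2)).sum := by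
    have := congrArg (fun T => ((T.map (fun x : ℝ => x ^ 2)).sum)) hAdecomp
    simp only [Multiset.map_add, Multiset.sum_add] at this
    linarith
  have h1 : tss (A - S) = (A.map (fun x => x ^ 2)).sum - (S.map (fun x => x ^ 2)).sum
      - (A.sum - S.sum) ^ 2 / ((A.card : ℝ) - k) := by
    rw [tss_eq _ (by rw [hcardAS]; exact hd1), hcardAS, hsumAS, hsqAS]
  have h2 : tss (B + S) = (B.map (fun x => x ^ 2)).sum + (S.map (fun x => x ^ 2)).sum
      + (- ((B.sum + S.sum) ^ 2 / ((B.card : ℝ) + k))) := by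
    rw [tss_eq _ (by rw [hcardBS]; exact hd2), hcardBS, Multiset.sum_add]
    simp only [Multiset.map_add, Multiset.sum_add]
    ring
  have hmulA : 2 * (A.sum / A.card) * (A.card : ℝ) = 2 * A.sum := by
    have hn : (A.card : ℝ) ≠ 0 := by
      have : (0:ℕ) < A.card := lt_of_le_of_lt (Nat.zero_le k) hkn
      exact_mod_cast this.ne'
    field_simp
  have hmulB : 2 * (B.sum / B.card) * (B.card : ℝ) = 2 * B.sum := by
    rcases eq_or_ne B 0 with hB | hB
    · simp [hB]
    · have hm : (B.card : ℝ) ≠ 0 := by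
        exact_mod_cast (Multiset.card_pos.mpr hB).ne'
      field_simp
  rw [h1, h2, hmulA, hmulB]
  field_simp
  ring
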